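/- Let (𝒱, ℰ) be a tree-cover of a finite metric space (X,d) and let W be a minimum spanning tree of (X,d). Then for every edge (u,v) of W there exists a unique set A ∈ ℰ containing both endpoints u and v. -/

import Mathlib

open scoped Classical

noncomputable section

namespace Skel

/-- `m`-dimensional Euclidean space. -/
abbrev Euc (m : ℕ) : Type := EuclideanSpace ℝ (Fin m)

/-- Length (Euclidean distance between the two members) of an unordered pair of points. -/
def sym2Dist {X : Type*} [PseudoMetricSpace X] : Sym2 X → ℝ :=
  Sym2.lift ⟨fun u v => dist u v, fun u v => dist_comm u v⟩

/-- Euclidean length of an edge under a vertex placement `pos`. -/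
def edgeLen {V : Type*} {m : ℕ} (pos : V → Euc m) (e : Sym2 V) : ℝ :=
  sym2Dist (e.map pos)

/-- Straight-line segment realizing an unordered pair of vertices. -/
def edgeSeg {V : Type*} {m : ℕ} (pos : V → Euc m) : Sym2 V → Set (Euc m) :=
  Sym2.lift ⟨fun u v => segment ℝ (pos u) (pos v), fun u v => segment_symm ℝ (pos u) (pos v)⟩

/-- Closed `ε`-offset of a set. -/
def offset {X : Type*} [PseudoMetricSpace X] (S : Set X) (ε : ℝ) : Set X :=
  {x | ∃ y ∈ S, dist x y ≤ ε}

/-- Geometric realization (union of straight-line edges) of a graph. -/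
def shape {V : Type*} {m : ℕ} (G : SimpleGraph V) (pos : V → Euc m) : Set (Euc m) :=
  ⋃ e ∈ G.edgeSet, edgeSeg pos e

/-- Geometric realization of the portion of a graph inside a vertex subset `S`. -/
def shapeOn {V : Type*} {m : ℕ} (G : SimpleGraph V) (pos : V → Euc m) (S : Set V) :
    Set (Euc m) :=
  (pos '' S) ∪ ⋃ e ∈ {e ∈ G.edgeSet | ∀ x ∈ e, x ∈ S}, edgeSeg pos e

/-- Total length of a walk in a geometric graph. -/
def walkCost {X : Type*} [PseudoMetricSpace X] {G : SimpleGraph X} {u v : X}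
    (p : G.Walk u v) : ℝ :=
  (p.edges.map sym2Dist).sum

/-- Shortest-path metric of a geometric graph (edges weighted by Euclidean length). -/
def pathDist {X : Type*} [PseudoMetricSpace X] (G : SimpleGraph X) (u v : X) : ℝ :=
  sInf {c | ∃ p : G.Walk u v, walkCost p = c}

/-- Maximal edge length of a geometric graph. -/
def lmax {X : Type*} [PseudoMetricSpace X] (G : SimpleGraph X) : ℝ :=
  sSup (sym2Dist '' G.edgeSet)

/-- Minimal distance between two sets. -/
def setDist {X : Type*} [PseudoMetricSpace X] (s t : Set X) : ℝ :=
  sInf {d | ∃ x ∈ s, ∃ y ∈ t, d = dist x y}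

/-- Two edges (unordered pairs) are non-adjacent: distinct and sharing no vertex. -/
def nonAdjacent {V : Type*} (e h : Sym2 V) : Prop :=
  e ≠ h ∧ ∀ x, x ∈ e → x ∉ h

/-- The set of angles between pairs of (distinct) edges adjacent at a common vertex. -/
def angleSet {V : Type*} {m : ℕ} (T : SimpleGraph V) (pos : V → Euc m) : Set ℝ :=
  {θ | ∃ v a b : V, T.Adj v a ∧ T.Adj v b ∧ a ≠ b ∧
    θ = EuclideanGeometry.angle (pos a) (pos v) (pos b)}

/-- Total edge cost of a graph, edges weighted by `d`. -/
def graphCost {X : Type*} (d : X → X → ℝ) (W : SimpleGraph X) : ℝ :=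
  (∑ᶠ u, ∑ᶠ v, if W.Adj u v then d u v else 0) / 2

/-- A minimum spanning tree on the whole vertex type, edges weighted by `d`. -/
def IsMST {X : Type*} (d : X → X → ℝ) (W : SimpleGraph X) : Prop :=
  W.IsTree ∧ ∀ W' : SimpleGraph X, W'.IsTree → graphCost d W ≤ graphCost d W'

/-- A graph on an ambient type whose edges lie in `S` and which spans `S` as a tree. -/
def IsSpanningTreeOn {X : Type*} (S : Set X) (W : SimpleGraph X) : Prop :=
  (∀ a b, W.Adj a b → a ∈ S ∧ b ∈ S) ∧ (W.induce S).IsTree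

/-- A minimum spanning tree of the metric subspace `(S, d)`, realized on the ambient type. -/
def IsMSTOn {X : Type*} (d : X → X → ℝ) (S : Set X) (W : SimpleGraph X) : Prop :=
  IsSpanningTreeOn S W ∧
    ∀ W' : SimpleGraph X, IsSpanningTreeOn S W' → graphCost d W ≤ graphCost d W'

/-- Graph-cover `(𝒱, ℰ)` of the space `X`. -/
def IsGraphCover {X : Type*} (V : Set X) (E : Set (Set X)) : Prop :=
  V.Finite ∧ E.Finite ∧ ⋃₀ E = Set.univ ∧
    (∀ A ∈ E, ∀ B ∈ E, A ≠ B → (A ∩ B).Subsingleton ∧ A ∩ B ⊆ V) ∧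
    (∀ A ∈ E, ∃ u v : X, u ≠ v ∧ V ∩ A = {u, v})

/-- Underlying simple graph of the nerve of a cover. -/
def nerve {X : Type*} (V : Set X) (E : Set (Set X)) : SimpleGraph V where
  Adj u v := u ≠ v ∧ ∃ A ∈ E, (u : X) ∈ A ∧ (v : X) ∈ A
  symm := by
    constructor
    rintro u v ⟨h, A, hA, hu, hv⟩
    exact ⟨Ne.symm h, A, hA, hv, hu⟩
  loopless := by
    constructor
    rintro u ⟨h, -⟩
    exact h rfl

/-- The nerve, as a multigraph with one edge per cover set, is a tree:
its underlying simple graph is a tree and there are no parallel edges. -/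
def NerveIsTree {X : Type*} (V : Set X) (E : Set (Set X)) : Prop :=
  (nerve V E).IsTree ∧
    ∀ A ∈ E, ∀ B ∈ E, ∀ u v : X, u ≠ v → u ∈ V → v ∈ V →
      u ∈ A → v ∈ A → u ∈ B → v ∈ B → A = B

/-- Tree-cover of a space with distance function `d`. -/
def IsTreeCover {X : Type*} (d : X → X → ℝ) (V : Set X) (E : Set (Set X)) : Prop :=
  IsGraphCover V E ∧ NerveIsTree V E ∧
    ∀ u v : X, u ≠ v → (¬ ∃ A ∈ E, u ∈ A ∧ v ∈ A) →
      ∃ t : X, max (d u t) (d v t) < d u v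

/-- Standing hypotheses: `T` is a straight-line tree realized by `pos` in `ℝ^m`,
`C` is an `ε`-sample of `T`, `G` is a connected graph with vertex set `C` which is a
`γ`-approximation of `(T, C)`, `D ⊆ C` is `δ`-sparse in the path metric of `G`,
every vertex of `T` lies within `ε` of `D`, `θT` is the minimal angle between adjacent
edges of `T`, and `δ` satisfies the key inequality. -/
structure Standing {V : Type*} {m : ℕ} (T : SimpleGraph V) (pos : V → Euc m)
    (C D : Set (Euc m)) (G : SimpleGraph (Euc m)) (γ ε δ θT : ℝ) : Prop where
  tree : T.IsTree
  pos_inj : Function.Injective pos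
  eps_pos : 0 < ε
  gamma_ge : 1 ≤ γ
  C_fin : C.Finite
  sample : ∀ p ∈ C, ∃ q ∈ shape T pos, dist p q ≤ ε
  G_support : ∀ a b, G.Adj a b → a ∈ C ∧ b ∈ C
  G_conn : ∀ a ∈ C, ∀ b ∈ C, G.Reachable a b
  approx1 : ∀ e ∈ T.edgeSet, ∀ a ∈ C, ∀ b ∈ C,
      a ∈ offset (edgeSeg pos e) ε → b ∈ offset (edgeSeg pos e) ε →
      pathDist G a b ≤ γ * dist a b
  approx2 : ∀ e ∈ T.edgeSet, ∀ h ∈ T.edgeSet, nonAdjacent e h →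
      lmax G + 2 * ε < setDist (edgeSeg pos e) (edgeSeg pos h)
  D_sub : D ⊆ C
  sparse : ∀ a ∈ D, ∀ b ∈ D, a ≠ b → δ ≤ pathDist G a b
  vert_close : ∀ v : V, ∃ p ∈ D, dist (pos v) p ≤ ε
  theta_least : IsLeast (angleSet T pos) θT
  delta_ge : 2 * γ * (ε + ε / Real.sin (θT / 2)
      + lmax G / Real.sin (min θT (Real.pi / 2))) ≤ δ

end Skel

open Skel

/-!
An edge `uv` of a minimum spanning tree satisfies `d(u, v) ≤ max (d(u, t)) (d(v, t))` for every
point `t` (the cut property): deleting `uv` splits the tree into a `u`-side and a `v`-side, and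
if `t` lies on the `v`-side, exchanging `uv` for `ut` gives another spanning tree, whose cost
exceeds that of the minimum one by `d(u, t) - d(u, v)`. Hence the last clause of the tree-cover
definition cannot apply to `u, v`, so some cover set contains both; it is unique because two
distinct cover sets share at most one point.
-/

namespace SimpleGraph

variable {V : Type*} {G : SimpleGraph V} {u v t x : V}

theorem Reachable.deleteEdges_reachable_or (h : G.Reachable u x) :
    (G.deleteEdges {s(u, v)}).Reachable u x ∨ (G.deleteEdges {s(u, v)}).Reachable v x := by
  rw [reachable_iff_reflTransGen] at h
  induction h with
  | refl => exact .inl .rfl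
  | @tail a b _ hab ih =>
    by_cases he : s(a, b) = s(u, v)
    · rcases Sym2.eq_iff.1 he with ⟨-, rfl⟩ | ⟨-, rfl⟩
      · exact .inr .rfl
      · exact .inl .rfl
    · have hab' : (G.deleteEdges {s(u, v)}).Adj a b := (deleteEdges_adj ..).2 ⟨hab, he⟩
      exact ih.imp (·.trans hab'.reachable) (·.trans hab'.reachable)

theorem IsAcyclic.not_reachable_deleteEdges (hG : G.IsAcyclic) (huv : G.Adj u v)
    (hvt : (G.deleteEdges {s(u, v)}).Reachable v t) : ¬(G.deleteEdges {s(u, v)}).Reachable u t :=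
  fun hut ↦ isBridge_iff.1 (isAcyclic_iff_forall_adj_isBridge.1 hG huv) (hut.trans hvt.symm)

theorem IsTree.deleteEdges_sup_edge (hG : G.IsTree) (huv : G.Adj u v)
    (hvt : (G.deleteEdges {s(u, v)}).Reachable v t) :
    (G.deleteEdges {s(u, v)} ⊔ edge u t).IsTree := by
  have hsep := hG.isAcyclic.not_reachable_deleteEdges huv hvt
  have hut : (G.deleteEdges {s(u, v)} ⊔ edge u t).Adj u t :=
    .inr ((edge_adj ..).2 ⟨.inl ⟨rfl, rfl⟩, fun h ↦ hsep (h ▸ .rfl)⟩)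
  refine ⟨(connected_iff_exists_forall_reachable _).2 ⟨u, fun x ↦ ?_⟩,
    (hG.isAcyclic.anti (deleteEdges_le _)).sup_edge_of_not_reachable hsep⟩
  rcases (hG.connected.preconnected u x).deleteEdges_reachable_or (v := v) with hx | hx
  · exact hx.mono le_sup_left
  · exact hut.reachable.trans ((hvt.symm.trans hx).mono le_sup_left)

end SimpleGraph

open SimpleGraph Finset

namespace Skel

variable {X : Type*}

theorem graphCost_eq_sum_edgeFinset [Fintype X] (d : X → X → ℝ) (hd : ∀ a b, d a b = d b a)
    (G : SimpleGraph X) :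
    graphCost d G = ∑ e ∈ G.edgeFinset, Sym2.lift ⟨d, hd⟩ e := by
  have hdarts : ∑ a, ∑ b, (if G.Adj a b then d a b else 0) = ∑ x : G.Dart, d x.fst x.snd := by
    rw [← Finset.sum_product', ← Finset.sum_filter]
    exact Finset.sum_bij' (fun p hp ↦ ⟨p, (mem_filter.1 hp).2⟩) (fun x _ ↦ x.toProd)
      (by simp) (by simp) (by simp) (by simp) (by simp)
  have hfiber :
      ∑ x : G.Dart, d x.fst x.snd = ∑ e ∈ G.edgeFinset, 2 * Sym2.lift ⟨d, hd⟩ e := by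
    rw [← Finset.sum_fiberwise_of_maps_to (g := Dart.edge) (t := G.edgeFinset) (by simp)]
    refine Finset.sum_congr rfl fun e he ↦ ?_
    rw [Finset.sum_eq_card_nsmul (b := Sym2.lift ⟨d, hd⟩ e)
        fun x hx ↦ (mem_filter.1 hx).2 ▸ rfl,
      G.dart_edge_fiber_card e (mem_edgeFinset.1 he), nsmul_eq_mul, Nat.cast_ofNat]
  rw [graphCost, finsum_eq_sum_of_fintype]
  simp only [finsum_eq_sum_of_fintype]
  rw [hdarts, hfiber, ← Finset.mul_sum]
  ring

theorem graphCost_deleteEdges_sup_edge [Fintype X] (d : X → X → ℝ)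
    (hd : ∀ a b, d a b = d b a) {W : SimpleGraph X} {u v t : X} (huv : W.Adj u v) (hut : u ≠ t)
    (hnadj : ¬(W.deleteEdges {s(u, v)}).Adj u t) :
    graphCost d (W.deleteEdges {s(u, v)} ⊔ edge u t) = graphCost d W - d u v + d u t := by
  have huv' : s(u, v) ∈ W.edgeFinset := mem_edgeFinset.2 huv
  have hnew : s(u, t) ∉ W.edgeFinset.erase s(u, v) := by
    rw [deleteEdges_adj, Set.mem_singleton_iff] at hnadj
    rw [mem_erase, mem_edgeFinset, mem_edgeSet]
    tauto
  simp only [graphCost_eq_sum_edgeFinset d hd]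
  calc _ = ∑ e ∈ (W.edgeFinset.erase s(u, v)).cons s(u, t) hnew, Sym2.lift ⟨d, hd⟩ e := by
        congr 1
        ext e
        simp [edgeSet_edge_of_ne hut, or_comm, and_comm]
    _ = _ := by
        rw [Finset.sum_cons, Finset.sum_erase_eq_sub huv', Sym2.lift_mk, Sym2.lift_mk]
        ring

theorem IsMST.le_of_reachable_deleteEdges [Finite X] {d : X → X → ℝ}
    (hd : ∀ a b, d a b = d b a) {W : SimpleGraph X} (hW : IsMST d W) {u v t : X} (huv : W.Adj u v)
    (hvt : (W.deleteEdges {s(u, v)}).Reachable v t) : d u v ≤ d u t := by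
  have := Fintype.ofFinite X
  have hsep := hW.1.isAcyclic.not_reachable_deleteEdges huv hvt
  have hcost := hW.2 _ (hW.1.deleteEdges_sup_edge huv hvt)
  rw [graphCost_deleteEdges_sup_edge d hd huv (fun h ↦ hsep (h ▸ .rfl))
    (fun h ↦ hsep h.reachable)] at hcost
  linarith

theorem IsMST.le_max_of_adj [Finite X] {d : X → X → ℝ} (hd : ∀ a b, d a b = d b a)
    {W : SimpleGraph X} (hW : IsMST d W) {u v : X} (huv : W.Adj u v) (t : X) :
    d u v ≤ max (d u t) (d v t) := by
  rcases (hW.1.connected.preconnected u t).deleteEdges_reachable_or (v := v) with ht | ht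
  · rw [Sym2.eq_swap] at ht
    rw [hd u v]
    exact le_max_of_le_right (hW.le_of_reachable_deleteEdges hd huv.symm ht)
  · exact le_max_of_le_left (hW.le_of_reachable_deleteEdges hd huv ht)

theorem IsGraphCover.eq_of_mem_of_mem {V : Set X} {E : Set (Set X)} (hcov : IsGraphCover V E)
    {A B : Set X} (hA : A ∈ E) (hB : B ∈ E) {u v : X} (huv : u ≠ v)
    (huA : u ∈ A) (hvA : v ∈ A) (huB : u ∈ B) (hvB : v ∈ B) : A = B := by
  by_contra hAB
  exact huv ((hcov.2.2.2.1 A hA B hB hAB).1 ⟨huA, huB⟩ ⟨hvA, hvB⟩)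

end Skel

/-- Every edge of a minimum spanning tree of a finite metric space carrying a tree-cover
is contained in a unique cover set. -/
theorem statement4 {X : Type*} [MetricSpace X] [Finite X]
    (Vc : Set X) (Ec : Set (Set X))
    (hcov : IsTreeCover (fun a b => dist a b) Vc Ec)
    (W : SimpleGraph X) (hW : IsMST (fun a b => dist a b) W) :
    ∀ u v : X, W.Adj u v → ∃! A : Set X, A ∈ Ec ∧ u ∈ A ∧ v ∈ A := by
  intro u v huv
  obtain ⟨A, hA, huA, hvA⟩ : ∃ A ∈ Ec, u ∈ A ∧ v ∈ A := by
    by_contra hno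
    obtain ⟨t, ht⟩ := hcov.2.2 u v huv.ne hno
    exact (hW.le_max_of_adj dist_comm huv t).not_gt ht
  exact ⟨A, ⟨hA, huA, hvA⟩, fun B ⟨hB, huB, hvB⟩ ↦
    hcov.1.eq_of_mem_of_mem hB hA huv.ne huB hvB huA hvA⟩
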